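/- The Golden–Thompson-type inequality fails for the Mittag-Leffler function at α = 1/2 in the scalar case: E_{1/2}(1+1) > E_{1/2}(1) · E_{1/2}(1). -/

import Mathlib

/-! Since `0 ≤ erfc ≤ 2` everywhere, `(e · erfc (-1))² ≤ 4e²`, and `4e² < e⁴` because `e > 2`.
On the other hand more than half of the Gaussian mass lies to the right of `-2`, so
`erfc (-2) > 1` and `e⁴ · erfc (-2) > e⁴`. -/

open Real MeasureTheory

noncomputable def erfc (x : ℝ) : ℝ :=
  (2 / Real.sqrt π) * ∫ u in Set.Ioi x, Real.exp (-u ^ 2)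

lemma integrable_exp_neg_sq : Integrable fun u : ℝ => exp (-u ^ 2) := by
  simpa using integrable_exp_neg_mul_sq one_pos

lemma integral_exp_neg_sq : ∫ u : ℝ, exp (-u ^ 2) = √π := by
  simpa using integral_gaussian 1

lemma erfc_nonneg (x : ℝ) : 0 ≤ erfc x := by
  have hI : 0 ≤ ∫ u in Set.Ioi x, exp (-u ^ 2) :=
    setIntegral_nonneg measurableSet_Ioi fun u _ => (exp_pos _).le
  unfold erfc
  positivity

lemma erfc_le_two (x : ℝ) : erfc x ≤ 2 := by
  have hI : ∫ u in Set.Ioi x, exp (-u ^ 2) ≤ √π := by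
    rw [← integral_exp_neg_sq]
    exact setIntegral_le_integral integrable_exp_neg_sq
      (Filter.Eventually.of_forall fun u => (exp_pos _).le)
  have hπ : 0 < √π := sqrt_pos.2 pi_pos
  calc erfc x ≤ 2 / √π * √π := mul_le_mul_of_nonneg_left hI (by positivity)
    _ = 2 := by field_simp

lemma one_lt_erfc_of_neg {x : ℝ} (hx : x < 0) : 1 < erfc x := by
  have hsplit : ∫ u in Set.Ioi x, exp (-u ^ 2)
      = (∫ u in Set.Ioc x 0, exp (-u ^ 2)) + ∫ u in Set.Ioi 0, exp (-u ^ 2) := by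
    rw [← Set.Ioc_union_Ioi_eq_Ioi hx.le]
    exact setIntegral_union (Set.Ioc_disjoint_Ioi le_rfl) measurableSet_Ioi
      integrable_exp_neg_sq.integrableOn integrable_exp_neg_sq.integrableOn
  have hhalf : ∫ u in Set.Ioi 0, exp (-u ^ 2) = √π / 2 := by
    simpa using integral_gaussian_Ioi 1
  have hpos : 0 < ∫ u in Set.Ioc x 0, exp (-u ^ 2) := by
    rw [← intervalIntegral.integral_of_le hx.le]
    exact intervalIntegral.intervalIntegral_pos_of_pos_on
      integrable_exp_neg_sq.intervalIntegrable (fun u _ => exp_pos _) hx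
  have hπ : 0 < √π := sqrt_pos.2 pi_pos
  calc 1 = 2 / √π * (√π / 2) := by field_simp
    _ < erfc x := by
      unfold erfc
      rw [hsplit, hhalf]
      gcongr
      linarith

lemma four_lt_exp_two : 4 < exp 2 := by
  have he : 2 < exp 1 := lt_trans (by norm_num) exp_one_gt_d9
  calc (4 : ℝ) = 2 * 2 := by norm_num
    _ < exp 1 * exp 1 := by gcongr
    _ = exp 2 := by rw [← exp_add]; norm_num

theorem goldenThompson_fails_for_mittagLeffler_half :
    Real.exp ((1 + 1 : ℝ) ^ 2) * erfc (-(1 + 1)) >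
      (Real.exp (1 ^ 2) * erfc (-1)) * (Real.exp (1 ^ 2) * erfc (-1)) := by
  have hE1 : exp (1 ^ 2) * erfc (-1) ≤ 2 * exp 1 := by
    rw [one_pow, mul_comm 2]
    exact mul_le_mul_of_nonneg_left (erfc_le_two _) (exp_pos _).le
  have hE1_nonneg : 0 ≤ exp (1 ^ 2) * erfc (-1) := mul_nonneg (exp_pos _).le (erfc_nonneg _)
  calc (exp (1 ^ 2) * erfc (-1)) * (exp (1 ^ 2) * erfc (-1))
      ≤ (2 * exp 1) * (2 * exp 1) := mul_le_mul hE1 hE1 hE1_nonneg (by positivity)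
    _ = 4 * exp 2 := by rw [← one_add_one_eq_two, exp_add]; ring
    _ < exp 2 * exp 2 := by gcongr; exact four_lt_exp_two
    _ = exp ((1 + 1) ^ 2) := by rw [← exp_add]; norm_num
    _ < exp ((1 + 1) ^ 2) * erfc (-(1 + 1)) :=
      lt_mul_of_one_lt_right (exp_pos _) (one_lt_erfc_of_neg (by norm_num))
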